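/- Assuming Schmüdgen's Positivstellensatz (if S_g is compact and f > 0 on S_g then f ∈ T_g), the following degree-bounded version holds: for all L ∈ ℕ there exists N ∈ ℕ such that every f ∈ ℝ[X] with deg(f) ≤ L, ‖f‖ ≤ L, and f ≥ 1/L on S_g, satisfies f ∈ T_g[N]. -/

import Mathlib

def IsSOS {n : ℕ} (p : MvPolynomial (Fin n) ℝ) : Prop :=
  ∃ (k : ℕ) (q : Fin k → MvPolynomial (Fin n) ℝ), p = ∑ i, q i ^ 2

/-- `g^α` for `α ∈ {0,1}^m`. -/
noncomputable def gPow {n m : ℕ} (g : Fin m → MvPolynomial (Fin n) ℝ) (α : Fin m → Bool) :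
    MvPolynomial (Fin n) ℝ :=
  ∏ i, if α i then g i else 1

/-- The preordering generated by `g`. -/
def Tg {n m : ℕ} (g : Fin m → MvPolynomial (Fin n) ℝ) :
    Set (MvPolynomial (Fin n) ℝ) :=
  {f | ∃ s : (Fin m → Bool) → MvPolynomial (Fin n) ℝ,
    (∀ α, IsSOS (s α)) ∧ f = ∑ α, gPow g α * s α}

/-- The truncated preordering generated by `g`. -/
def Ttrunc {n m : ℕ} (g : Fin m → MvPolynomial (Fin n) ℝ) (N : ℕ) :
    Set (MvPolynomial (Fin n) ℝ) :=
  {f | ∃ s : (Fin m → Bool) → MvPolynomial (Fin n) ℝ,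
    (∀ α, IsSOS (s α)) ∧ (∀ α, (gPow g α * s α).totalDegree ≤ N) ∧
    f = ∑ α, gPow g α * s α}

/-- The basic closed semialgebraic set defined by `g`. -/
def Sg {n m : ℕ} (g : Fin m → MvPolynomial (Fin n) ℝ) : Set (Fin n → ℝ) :=
  {x | ∀ i, 0 ≤ MvPolynomial.eval x (g i)}

/-- A fixed norm on polynomials: the sum of absolute values of the coefficients. -/
def polyNorm {n : ℕ} (f : MvPolynomial (Fin n) ℝ) : ℝ :=
  ∑ d ∈ f.support, |f.coeff d|

open MvPolynomial in
lemma isSOS_zero {n : ℕ} : IsSOS (0 : MvPolynomial (Fin n) ℝ) :=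
  ⟨0, fun i => 0, by simp⟩

open MvPolynomial in
lemma isSOS_smul_sq {n : ℕ} (a : ℝ) (ha : 0 ≤ a) (p : MvPolynomial (Fin n) ℝ) :
    IsSOS (a • p ^ 2) := by
  refine ⟨1, fun _ => C (Real.sqrt a) * p, ?_⟩
  rw [Fin.sum_univ_one, mul_pow, ← C_pow, Real.sq_sqrt ha, smul_eq_C_mul]

lemma isSOS_add {n : ℕ} {p q : MvPolynomial (Fin n) ℝ} (hp : IsSOS p) (hq : IsSOS q) :
    IsSOS (p + q) := by
  obtain ⟨k, r, rfl⟩ := hp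
  obtain ⟨k', r', rfl⟩ := hq
  refine ⟨k + k', Fin.append r r', ?_⟩
  rw [Fin.sum_univ_add]
  simp [Fin.append_left, Fin.append_right]

lemma isSOS_sum {n : ℕ} {ι : Type*} (s : Finset ι) (r : ι → MvPolynomial (Fin n) ℝ)
    (h : ∀ i ∈ s, IsSOS (r i)) : IsSOS (∑ i ∈ s, r i) := by
  classical
  induction s using Finset.induction_on with
  | empty => simpa using isSOS_zero
  | insert a t hx ih =>
    rw [Finset.sum_insert hx]
    exact isSOS_add (h a (Finset.mem_insert_self a t))
      (ih fun i hi => h i (Finset.mem_insert_of_mem hi))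

open MvPolynomial in
lemma gPow_false {n m : ℕ} (g : Fin m → MvPolynomial (Fin n) ℝ) :
    gPow g (fun _ => false) = 1 := by
  simp [gPow]

open MvPolynomial in
lemma sos_mem_Ttrunc {n m : ℕ} (g : Fin m → MvPolynomial (Fin n) ℝ) {N : ℕ}
    {p : MvPolynomial (Fin n) ℝ} (hp : IsSOS p) (hd : p.totalDegree ≤ N) :
    p ∈ Ttrunc g N := by
  classical
  refine ⟨fun α => if α = (fun _ => false) then p else 0, ?_, ?_, ?_⟩
  · intro α; by_cases h : α = fun _ => false <;> simp [h, hp, isSOS_zero]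
  · intro α; by_cases h : α = fun _ => false <;> simp [h, gPow_false, hd]
  · rw [Finset.sum_eq_single (fun _ => false)]
    · simp [gPow_false]
    · intro b _ hb; simp [hb]
    · intro h; exact absurd (Finset.mem_univ _) h

lemma Ttrunc_add {n m : ℕ} {g : Fin m → MvPolynomial (Fin n) ℝ} {N : ℕ}
    {p q : MvPolynomial (Fin n) ℝ} (hp : p ∈ Ttrunc g N) (hq : q ∈ Ttrunc g N) :
    p + q ∈ Ttrunc g N := by
  obtain ⟨s, hs, hdeg, rfl⟩ := hp
  obtain ⟨s', hs', hdeg', rfl⟩ := hq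
  refine ⟨fun α => s α + s' α, fun α => isSOS_add (hs α) (hs' α), ?_, ?_⟩
  · intro α
    rw [mul_add]
    exact le_trans (MvPolynomial.totalDegree_add _ _) (max_le (hdeg α) (hdeg' α))
  · rw [← Finset.sum_add_distrib]
    exact Finset.sum_congr rfl fun α _ => (mul_add _ _ _).symm

lemma Ttrunc_mono {n m : ℕ} {g : Fin m → MvPolynomial (Fin n) ℝ} {N N' : ℕ} (h : N ≤ N')
    {p : MvPolynomial (Fin n) ℝ} (hp : p ∈ Ttrunc g N) : p ∈ Ttrunc g N' := by
  obtain ⟨s, hs, hdeg, rfl⟩ := hp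
  exact ⟨s, hs, fun α => le_trans (hdeg α) h, rfl⟩

lemma Tg_exists_trunc {n m : ℕ} {g : Fin m → MvPolynomial (Fin n) ℝ}
    {p : MvPolynomial (Fin n) ℝ} (hp : p ∈ Tg g) : ∃ N, p ∈ Ttrunc g N := by
  obtain ⟨s, hs, rfl⟩ := hp
  exact ⟨Finset.univ.sup fun α => (gPow g α * s α).totalDegree,
    s, hs, fun α => Finset.le_sup (f := fun α => (gPow g α * s α).totalDegree) (Finset.mem_univ α), rfl⟩

open MvPolynomial in
lemma key_id {n : ℕ} (e c4 : ℝ) (p : MvPolynomial (Fin n) ℝ) :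
    (e + c4) • (p + 1) ^ 2 + (e - c4) • (p - 1) ^ 2 - e • ((p + 1) ^ 2 + (p - 1) ^ 2)
      = C (4 * c4) * p := by
  rw [smul_eq_C_mul, smul_eq_C_mul, smul_eq_C_mul, map_add, map_sub, map_mul, map_ofNat]
  ring

lemma finsupp_sum_le {n L : ℕ} (d : Fin n →₀ ℕ) (h : ∀ i, d i ≤ L) :
    (d.sum fun _ e => e) ≤ n * L := by
  rw [Finsupp.sum]
  calc ∑ i ∈ d.support, d i ≤ ∑ i : Fin n, d i :=
        Finset.sum_le_sum_of_subset (Finset.subset_univ _)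
    _ ≤ ∑ _i : Fin n, L := Finset.sum_le_sum fun i _ => h i
    _ = n * L := by simp [Finset.sum_const, mul_comm]

open MvPolynomial in
lemma deg_sq_le {n L : ℕ} (d : Fin n →₀ ℕ) (h : ∀ i, d i ≤ L) (c : ℝ) :
    ((monomial d (1:ℝ) + C c) ^ 2).totalDegree ≤ 2 * (n * L) := by
  refine le_trans (totalDegree_pow _ _) ?_
  refine Nat.mul_le_mul_left 2 ?_
  refine le_trans (totalDegree_add _ _) (max_le ?_ ?_)
  · exact le_trans (totalDegree_monomial_le _ _) (finsupp_sum_le d h)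
  · simp [totalDegree_C]

open MvPolynomial

set_option maxHeartbeats 1000000 in
theorem stmt10 {n m : ℕ} (g : Fin m → MvPolynomial (Fin n) ℝ)
    (hcomp : IsCompact (Sg g))
    (hschmudgen : ∀ f : MvPolynomial (Fin n) ℝ,
      (∀ x ∈ Sg g, 0 < MvPolynomial.eval x f) → f ∈ Tg g) :
    ∀ L : ℕ, ∃ N : ℕ, ∀ f : MvPolynomial (Fin n) ℝ,
      f.totalDegree ≤ L → polyNorm f ≤ L →
      (∀ x ∈ Sg g, (L : ℝ)⁻¹ ≤ MvPolynomial.eval x f) →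
      f ∈ Ttrunc g N := by
  classical
  intro L
  rcases Nat.eq_zero_or_pos L with hL0 | hL
  · -- L = 0 : f must be 0
    refine ⟨0, fun f hdeg hnorm _ => ?_⟩
    subst hL0
    have hf0 : f = 0 := by
      have hnn : ∀ d ∈ f.support, (0:ℝ) ≤ |f.coeff d| := fun d _ => abs_nonneg _
      have hz : ∀ d ∈ f.support, |f.coeff d| = 0 :=
        (Finset.sum_eq_zero_iff_of_nonneg hnn).mp
          (le_antisymm (by simpa [polyNorm] using hnorm) (Finset.sum_nonneg hnn))
      ext d
      by_cases hd : d ∈ f.support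
      · simpa using abs_eq_zero.mp (hz d hd)
      · simpa using MvPolynomial.notMem_support_iff.mp hd
    rw [hf0]
    exact sos_mem_Ttrunc g isSOS_zero (by simp)
  have hLR : (0:ℝ) < L := by exact_mod_cast hL
  set M0 : Fin n →₀ ℕ := Finsupp.equivFunOnFinite.symm (fun _ => L) with hM0
  set D : Finset (Fin n →₀ ℕ) := Finset.Iic M0 with hD
  have hDmem : ∀ d ∈ D, ∀ i, d i ≤ L := by
    intro d hd i
    have := Finset.mem_Iic.mp hd
    simpa [hM0] using this i
  have hsuppD : ∀ f : MvPolynomial (Fin n) ℝ, f.totalDegree ≤ L → f.support ⊆ D := by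
    intro f hf d hd
    rw [hD, Finset.mem_Iic]
    intro i
    simp only [hM0, Finsupp.coe_equivFunOnFinite_symm]
    refine le_trans ?_ (le_trans (MvPolynomial.le_totalDegree hd) hf)
    rw [Finsupp.sum]
    by_cases hi : i ∈ d.support
    · exact Finset.single_le_sum (fun j _ => Nat.zero_le _) hi
    · simp [Finsupp.notMem_support_iff.mp hi]
  set P : (↥D → ℝ) → MvPolynomial (Fin n) ℝ :=
    fun v => ∑ d ∈ D.attach, monomial d.1 (v d) with hP
  have hPeval : ∀ (x : Fin n → ℝ) (v : ↥D → ℝ),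
      eval x (P v) = ∑ d ∈ D.attach, v d * (d.1.prod fun i e => x i ^ e) := by
    intro x v
    rw [hP, map_sum]
    exact Finset.sum_congr rfl fun d _ => eval_monomial
  have hPf : ∀ f : MvPolynomial (Fin n) ℝ, f.totalDegree ≤ L →
      P (fun d => f.coeff d.1) = f := by
    intro f hf
    rw [hP]
    beta_reduce
    rw [Finset.sum_attach D (fun d => monomial d (f.coeff d))]
    have hz : ∀ d ∈ D, d ∉ f.support → monomial d (f.coeff d) = 0 := by
      intro d _ hd
      simp [MvPolynomial.notMem_support_iff.mp hd]
    rw [← Finset.sum_subset (hsuppD f hf) hz]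
    exact support_sum_monomial_coeff f
  set K : Set (↥D → ℝ) := {v | (∑ d ∈ D.attach, |v d|) ≤ L ∧
      ∀ x ∈ Sg g, (L : ℝ)⁻¹ ≤ eval x (P v)} with hK
  have hKclosed : IsClosed K := by
    refine IsClosed.inter ?_ ?_
    · exact isClosed_le (continuous_finset_sum _ fun d _ => (continuous_apply d).abs) continuous_const
    · have heq : {v : ↥D → ℝ | ∀ x ∈ Sg g, (L : ℝ)⁻¹ ≤ eval x (P v)} =
          ⋂ x ∈ Sg g, {v : ↥D → ℝ | (L : ℝ)⁻¹ ≤ eval x (P v)} := by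
        ext v; simp
      show IsClosed {v : ↥D → ℝ | ∀ x ∈ Sg g, (L : ℝ)⁻¹ ≤ eval x (P v)}
      rw [heq]
      refine isClosed_biInter fun x hx => ?_
      refine isClosed_le continuous_const ?_
      have : Continuous fun v : ↥D → ℝ =>
          ∑ d ∈ D.attach, v d * (d.1.prod fun i e => x i ^ e) :=
        continuous_finset_sum _ fun d _ => (continuous_apply d).mul continuous_const
      exact this.congr fun v => (hPeval x v).symm
  have hKcomp : IsCompact K := by
    refine (isCompact_closedBall (0 : ↥D → ℝ) L).of_isClosed_subset hKclosed ?_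
    intro v hv
    rw [Metric.mem_closedBall]
    refine dist_pi_le_iff (by positivity) |>.mpr fun d => ?_
    rw [Real.dist_eq]
    simp only [Pi.zero_apply, sub_zero]
    exact le_trans (Finset.single_le_sum (f := fun d => |v d|)
      (fun j _ => abs_nonneg _) (Finset.mem_attach _ d)) hv.1
  -- the auxiliary SOS bulk polynomial
  set Q : MvPolynomial (Fin n) ℝ :=
    ∑ d ∈ D.attach, ((monomial d.1 1 + 1) ^ 2 + (monomial d.1 1 - 1) ^ 2) with hQ
  obtain ⟨M, hM⟩ := hcomp.exists_bound_of_continuousOn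
    (MvPolynomial.continuous_eval (p := Q)).continuousOn
  set M' : ℝ := max M 0 with hM'
  set cst : ℝ := (2 * (L:ℝ))⁻¹ with hcst
  have hcstpos : 0 < cst := by rw [hcst]; positivity
  set ε : ℝ := cst / (M' + 1) with hε
  have hM'nn : 0 ≤ M' := le_max_right _ _
  have hεpos : 0 < ε := by rw [hε]; positivity
  -- G is positive on Sg
  set G : MvPolynomial (Fin n) ℝ := C cst - ε • Q with hG
  have hGpos : ∀ x ∈ Sg g, 0 < eval x G := by
    intro x hx
    rw [hG]
    simp only [map_sub, eval_C, smul_eval]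
    have h1 : eval x Q ≤ M' := le_trans (le_abs_self _)
      (le_trans (by simpa [Real.norm_eq_abs] using hM x hx) (le_max_left _ _))
    have h2 : ε * eval x Q ≤ ε * M' := mul_le_mul_of_nonneg_left h1 hεpos.le
    have h3 : ε * M' < cst := by
      rw [hε, div_mul_eq_mul_div, mul_comm, ← div_mul_eq_mul_div]
      calc M' / (M' + 1) * cst < 1 * cst := by
            refine mul_lt_mul_of_pos_right ?_ hcstpos
            rw [div_lt_one (by positivity)]; linarith
        _ = cst := one_mul cst
    linarith
  obtain ⟨N0, hN0⟩ := Tg_exists_trunc (hschmudgen G hGpos)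
  -- for each v in K, the shifted polynomial is in some truncation
  have hvpos : ∀ v : ↥K, ∀ x ∈ Sg g, 0 < eval x (P v.1 - C cst) := by
    intro v x hx
    simp only [map_sub, eval_C]
    have h1 : (L:ℝ)⁻¹ ≤ eval x (P v.1) := v.2.2 x hx
    have h2 : cst < (L:ℝ)⁻¹ := by
      rw [hcst]
      refine inv_strictAnti₀ hLR (by linarith)
    linarith
  have hNv : ∀ v : ↥K, ∃ N, P v.1 - C cst ∈ Ttrunc g N :=
    fun v => Tg_exists_trunc (hschmudgen _ (hvpos v))
  choose Nv hNvmem using hNv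
  -- finite subcover
  have hcover : K ⊆ ⋃ v : ↥K, Metric.ball v.1 (4 * ε) := by
    intro v hv
    exact Set.mem_iUnion.mpr ⟨⟨v, hv⟩, Metric.mem_ball_self (by positivity)⟩
  obtain ⟨t, ht⟩ := hKcomp.elim_finite_subcover _ (fun v => Metric.isOpen_ball) hcover
  refine ⟨max (max N0 (t.sup Nv)) (2 * (n * L)), ?_⟩
  intro f hdeg hnorm hpos
  -- the coefficient vector of f lies in K
  set vf : ↥D → ℝ := fun d => f.coeff d.1 with hvf
  have hPvf : P vf = f := hPf f hdeg
  have hvfK : vf ∈ K := by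
    constructor
    · rw [Finset.sum_attach D (fun d => |f.coeff d|)]
      have hz : ∀ d ∈ D, d ∉ f.support → |f.coeff d| = 0 := by
        intro d _ hd
        simp [MvPolynomial.notMem_support_iff.mp hd]
      rw [← Finset.sum_subset (hsuppD f hdeg) hz]
      simpa [polyNorm] using hnorm
    · intro x hx
      rw [hPvf]
      exact hpos x hx
  obtain ⟨v, hvt, hball⟩ := Set.mem_iUnion₂.mp (ht hvfK)
  -- coefficient perturbation
  set c : ↥D → ℝ := fun d => vf d - v.1 d with hc
  have hcsmall : ∀ d, |c d| < 4 * ε := by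
    intro d
    calc |c d| = dist (vf d) (v.1 d) := by rw [Real.dist_eq]
      _ ≤ dist vf v.1 := dist_le_pi_dist vf v.1 d
      _ < 4 * ε := Metric.mem_ball.mp hball
  set R : MvPolynomial (Fin n) ℝ := ∑ d ∈ D.attach,
      ((ε + c d / 4) • (monomial d.1 1 + 1) ^ 2 + (ε - c d / 4) • (monomial d.1 1 - 1) ^ 2)
    with hR
  -- the decomposition identity
  have hsplit : f = (P v.1 - C cst) + (G + R) := by
    have h1 : R - ε • Q = f - P v.1 := by
      rw [hR, hQ, Finset.smul_sum, ← Finset.sum_sub_distrib]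
      have h2 : ∀ d ∈ D.attach,
          ((ε + c d / 4) • (monomial d.1 (1:ℝ) + 1) ^ 2 + (ε - c d / 4) • (monomial d.1 1 - 1) ^ 2)
            - ε • ((monomial d.1 1 + 1) ^ 2 + (monomial d.1 1 - 1) ^ 2)
          = monomial d.1 (c d) := by
        intro d _
        rw [key_id ε (c d / 4) (monomial d.1 1)]
        rw [C_mul_monomial, mul_one]
        congr 1
        ring
      rw [Finset.sum_congr rfl h2]
      have h3 : f - P v.1 = P vf - P v.1 := by rw [hPvf]
      rw [h3, hP, ← Finset.sum_sub_distrib]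
      exact Finset.sum_congr rfl fun d _ => by
        simp only [hc, ← map_sub]
    have h4 : G + R = C cst + (R - ε • Q) := by rw [hG]; ring
    rw [h4, h1]; ring
  rw [hsplit]
  refine Ttrunc_add ?_ (Ttrunc_add ?_ ?_)
  · exact Ttrunc_mono (le_trans (le_trans (Finset.le_sup hvt) (le_max_right N0 _))
      (le_max_left _ _)) (hNvmem v)
  · exact Ttrunc_mono (le_trans (le_max_left N0 _) (le_max_left _ _)) hN0
  · refine sos_mem_Ttrunc g ?_ ?_
    · refine isSOS_sum _ _ fun d _ => isSOS_add ?_ ?_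
      · refine isSOS_smul_sq _ ?_ _
        obtain ⟨h1, h2⟩ := abs_lt.mp (hcsmall d)
        clear_value c ε
        linarith
      · refine isSOS_smul_sq _ ?_ _
        obtain ⟨h1, h2⟩ := abs_lt.mp (hcsmall d)
        clear_value c ε
        linarith
    · refine le_trans (MvPolynomial.totalDegree_finset_sum _ _) ?_
      refine le_trans (Finset.sup_le fun d _ => ?_) (le_max_right _ _)
      refine le_trans (MvPolynomial.totalDegree_add _ _) (max_le ?_ ?_)
      · refine le_trans (MvPolynomial.totalDegree_smul_le _ _) ?_
        have := deg_sq_le d.1 (hDmem d.1 d.2) 1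
        simpa using this
      · refine le_trans (MvPolynomial.totalDegree_smul_le _ _) ?_
        have := deg_sq_le d.1 (hDmem d.1 d.2) (-1)
        simp only [map_neg, map_one] at this
        convert this using 3
        · rfl
        · rw [sub_eq_add_neg]
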